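/- For any μ > 0 and any λ > 1, there exists a unique u ∈ (0,1) such that F_μ(u) = λ·u, where F_μ(u) = 1 - Φ(Φ⁻¹(1-u) - μ) and Φ is the standard normal CDF. -/

import Mathlib

open ProbabilityTheory

/-- The standard normal CDF. -/
noncomputable def Phi : ℝ → ℝ := fun x => ProbabilityTheory.cdf (gaussianReal 0 1) x

/-- The inverse of the standard normal CDF (on (0,1)). -/
noncomputable def PhiInv : ℝ → ℝ := Function.invFun Phi

/-- F_μ(u) = 1 - Φ(Φ⁻¹(1-u) - μ). -/
noncomputable def Fmu (μ u : ℝ) : ℝ := 1 - Phi (PhiInv (1 - u) - μ)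

/-!
Substituting `u = 1 - Φ x`, a bijection from `ℝ` onto `(0,1)`, turns `F_μ(u) = λ u` into
`g x = 0` for `g x = tailGap μ λ x = (1 - Φ (x - μ)) - λ (1 - Φ x)`.
Since `φ (x - μ) = φ x · exp (μ x - μ²/2)`, `g' x = φ x · (λ - exp (μ x - μ²/2))`:
`g` increases up to `x₀ = log λ / μ + μ / 2` and decreases after it. As `g → 1 - λ < 0` at `-∞`
and `g → 0` at `+∞`, `g` is positive on `[x₀, ∞)` and has exactly one zero, which lies in
`(-∞, x₀)`.
-/

open MeasureTheory Filter Set Topology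

theorem StrictAntiOn.lt_of_tendsto_atTop {f : ℝ → ℝ} {a l x : ℝ} (hf : StrictAntiOn f (Ici a))
    (hlim : Tendsto f atTop (𝓝 l)) (hx : a ≤ x) : l < f x := by
  have hle : l ≤ f (x + 1) := by
    refine le_of_tendsto hlim ?_
    filter_upwards [eventually_ge_atTop (x + 1)] with y hy
    exact hf.antitoneOn (show a ≤ x + 1 by linarith) (show a ≤ y by linarith) hy
  exact hle.trans_lt (hf hx (show a ≤ x + 1 by linarith) (by linarith))

theorem existsUnique_eq_zero_of_unimodal {f : ℝ → ℝ} {a : ℝ} (hf : Continuous f)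
    (hmono : StrictMonoOn f (Iic a)) (hanti : StrictAntiOn f (Ici a))
    (htop : Tendsto f atTop (𝓝 0)) (hneg : ∃ b, f b < 0) : ∃! x, f x = 0 := by
  have hlt : ∀ x, f x = 0 → x < a := fun x hx =>
    not_le.1 fun hax => (hanti.lt_of_tendsto_atTop htop hax).ne' hx
  obtain ⟨c, hc⟩ := mem_range_of_exists_le_of_exists_ge hf
    (hneg.imp fun _ => le_of_lt) ⟨a, (hanti.lt_of_tendsto_atTop htop le_rfl).le⟩
  exact ⟨c, hc, fun y hy =>
    hmono.injOn (hlt y hy).le (hlt c hc).le (hy.trans hc.symm)⟩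

noncomputable def phi : ℝ → ℝ := gaussianPDFReal 0 1

theorem phi_pos (x : ℝ) : 0 < phi x := gaussianPDFReal_pos 0 1 x one_ne_zero

theorem continuous_phi : Continuous phi := by
  rw [phi, gaussianPDFReal_def]
  fun_prop

theorem phi_sub (μ x : ℝ) : phi (x - μ) = phi x * Real.exp (μ * x - μ ^ 2 / 2) := by
  simp only [phi, gaussianPDFReal, NNReal.coe_one, mul_one, sub_zero]
  rw [mul_assoc, ← Real.exp_add]
  ring_nf

theorem Phi_eq_integral (x : ℝ) : Phi x = ∫ t in Iic x, phi t := by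
  rw [Phi, cdf_eq_real, measureReal_def, gaussianReal_apply_eq_integral 0 one_ne_zero,
    ENNReal.toReal_ofReal]
  · rfl
  · exact setIntegral_nonneg measurableSet_Iic fun t _ => gaussianPDFReal_nonneg 0 1 t

theorem hasDerivAt_Phi (x : ℝ) : HasDerivAt Phi (phi x) x := by
  have hint : Integrable phi := integrable_gaussianPDFReal 0 1
  have hPhi : Phi = fun y => Phi 0 + ∫ t in (0 : ℝ)..y, phi t := by
    funext y
    rw [Phi_eq_integral, Phi_eq_integral,
      ← intervalIntegral.integral_Iic_sub_Iic hint.integrableOn hint.integrableOn]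
    ring
  rw [hPhi]
  exact (intervalIntegral.integral_hasDerivAt_right hint.intervalIntegrable
    (continuous_phi.stronglyMeasurableAtFilter _ _) continuous_phi.continuousAt).const_add _

theorem continuous_Phi : Continuous Phi :=
  continuous_iff_continuousAt.2 fun x => (hasDerivAt_Phi x).continuousAt

theorem strictMono_Phi : StrictMono Phi :=
  strictMono_of_deriv_pos fun x => (hasDerivAt_Phi x).deriv ▸ phi_pos x

theorem tendsto_Phi_atBot : Tendsto Phi atBot (𝓝 0) := tendsto_cdf_atBot _

theorem tendsto_Phi_atTop : Tendsto Phi atTop (𝓝 1) := tendsto_cdf_atTop _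

theorem Phi_mem_Ioo (x : ℝ) : Phi x ∈ Ioo (0 : ℝ) 1 :=
  ⟨(cdf_nonneg _ (x - 1)).trans_lt (strictMono_Phi (by linarith)),
    (strictMono_Phi (by linarith : x < x + 1)).trans_le (cdf_le_one _ _)⟩

theorem mem_range_Phi {y : ℝ} (hy : y ∈ Ioo (0 : ℝ) 1) : y ∈ range Phi :=
  mem_range_of_exists_le_of_exists_ge continuous_Phi
    ((tendsto_Phi_atBot.eventually_lt_const hy.1).exists.imp fun _ => le_of_lt)
    ((tendsto_Phi_atTop.eventually_const_lt hy.2).exists.imp fun _ => le_of_lt)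

theorem PhiInv_Phi (x : ℝ) : PhiInv (Phi x) = x :=
  Function.leftInverse_invFun strictMono_Phi.injective x

theorem Fmu_one_sub_Phi (μ x : ℝ) : Fmu μ (1 - Phi x) = 1 - Phi (x - μ) := by
  rw [Fmu, sub_sub_cancel, PhiInv_Phi]

theorem exists_one_sub_Phi_eq {u : ℝ} (hu : u ∈ Ioo (0 : ℝ) 1) : ∃ x, 1 - Phi x = u :=
  (mem_range_Phi ⟨sub_pos.2 hu.2, sub_lt_self 1 hu.1⟩).imp fun _ hx => by rw [hx, sub_sub_cancel]

noncomputable def tailGap (μ lam x : ℝ) : ℝ := (1 - Phi (x - μ)) - lam * (1 - Phi x)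

section tailGap

variable {μ lam : ℝ}

theorem hasDerivAt_tailGap (μ lam x : ℝ) :
    HasDerivAt (tailGap μ lam) (phi x * (lam - Real.exp (μ * x - μ ^ 2 / 2))) x := by
  have hshift := (hasDerivAt_Phi (x - μ)).comp_sub_const x μ
  refine ((hshift.const_sub 1).sub (((hasDerivAt_Phi x).const_sub 1).const_mul lam)).congr_deriv ?_
  rw [phi_sub]
  ring

theorem continuous_tailGap (μ lam : ℝ) : Continuous (tailGap μ lam) :=
  continuous_iff_continuousAt.2 fun x => (hasDerivAt_tailGap μ lam x).continuousAt

theorem exp_mul_sub_lt_iff (hμ : 0 < μ) (hlam : 0 < lam) (x : ℝ) :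
    Real.exp (μ * x - μ ^ 2 / 2) < lam ↔ x < Real.log lam / μ + μ / 2 := by
  rw [← Real.lt_log_iff_exp_lt hlam, ← sub_lt_iff_lt_add, lt_div_iff₀ hμ]
  constructor <;> intro h <;> nlinarith

theorem lt_exp_mul_sub_iff (hμ : 0 < μ) (hlam : 0 < lam) (x : ℝ) :
    lam < Real.exp (μ * x - μ ^ 2 / 2) ↔ Real.log lam / μ + μ / 2 < x := by
  rw [← Real.log_lt_iff_lt_exp hlam, ← lt_sub_iff_add_lt, div_lt_iff₀ hμ]
  constructor <;> intro h <;> nlinarith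

theorem strictMonoOn_tailGap (hμ : 0 < μ) (hlam : 0 < lam) :
    StrictMonoOn (tailGap μ lam) (Iic (Real.log lam / μ + μ / 2)) := by
  refine strictMonoOn_of_deriv_pos (convex_Iic _) (continuous_tailGap μ lam).continuousOn
    fun x hx => ?_
  rw [interior_Iic] at hx
  rw [(hasDerivAt_tailGap μ lam x).deriv]
  exact mul_pos (phi_pos x) (sub_pos.2 ((exp_mul_sub_lt_iff hμ hlam x).2 hx))

theorem strictAntiOn_tailGap (hμ : 0 < μ) (hlam : 0 < lam) :
    StrictAntiOn (tailGap μ lam) (Ici (Real.log lam / μ + μ / 2)) := by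
  refine strictAntiOn_of_deriv_neg (convex_Ici _) (continuous_tailGap μ lam).continuousOn
    fun x hx => ?_
  rw [interior_Ici] at hx
  rw [(hasDerivAt_tailGap μ lam x).deriv]
  exact mul_neg_of_pos_of_neg (phi_pos x) (sub_neg.2 ((lt_exp_mul_sub_iff hμ hlam x).2 hx))

theorem tendsto_tailGap_atBot (μ lam : ℝ) : Tendsto (tailGap μ lam) atBot (𝓝 (1 - lam)) := by
  have hshift := tendsto_Phi_atBot.comp (tendsto_atBot_add_const_right _ (-μ) tendsto_id)
  unfold tailGap
  simpa [Function.comp_def, ← sub_eq_add_neg] using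
    (hshift.const_sub 1).sub ((tendsto_Phi_atBot.const_sub 1).const_mul lam)

theorem tendsto_tailGap_atTop (μ lam : ℝ) : Tendsto (tailGap μ lam) atTop (𝓝 0) := by
  have hshift := tendsto_Phi_atTop.comp (tendsto_atTop_add_const_right _ (-μ) tendsto_id)
  unfold tailGap
  simpa [Function.comp_def, ← sub_eq_add_neg] using
    (hshift.const_sub 1).sub ((tendsto_Phi_atTop.const_sub 1).const_mul lam)

theorem existsUnique_tailGap_eq_zero (hμ : 0 < μ) (hlam : 1 < lam) :
    ∃! x, tailGap μ lam x = 0 :=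
  existsUnique_eq_zero_of_unimodal (continuous_tailGap μ lam)
    (strictMonoOn_tailGap hμ (by linarith)) (strictAntiOn_tailGap hμ (by linarith))
    (tendsto_tailGap_atTop μ lam)
    ((tendsto_tailGap_atBot μ lam).eventually_lt_const (by linarith)).exists

end tailGap

theorem stmt_10 (μ lam : ℝ) (hμ : 0 < μ) (hlam : 1 < lam) :
    ∃! u, u ∈ Set.Ioo (0:ℝ) 1 ∧ Fmu μ u = lam * u := by
  obtain ⟨x, hx, hx_unique⟩ := existsUnique_tailGap_eq_zero hμ hlam
  have hmem : 1 - Phi x ∈ Ioo (0 : ℝ) 1 :=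
    ⟨sub_pos.2 (Phi_mem_Ioo x).2, sub_lt_self 1 (Phi_mem_Ioo x).1⟩
  refine ⟨1 - Phi x, ⟨hmem, ?_⟩, ?_⟩
  · rw [Fmu_one_sub_Phi]
    unfold tailGap at hx
    linarith
  · rintro u ⟨hu, hFu⟩
    obtain ⟨y, rfl⟩ := exists_one_sub_Phi_eq hu
    rw [Fmu_one_sub_Phi] at hFu
    rw [hx_unique y (by unfold tailGap; linarith)]
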